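/- Let d ≥ 1, α, ε > 0, and define the step weight q(r) = -α for r ≤ ε and q(r) = αβ for r > ε, where β = γ(d/2, 4π²ε²)/Γ(d/2, 4π²ε²). Then ∫₀^∞ q(√u/(2π)) u^{d/2-1} e^{-u} du = 0, and the associated kernel frequency k̂(r) = -(2πr)^{-d} e^{4π²r²} ∫₀^{4π²r²} q(√u/(2π)) u^{d/2-1} e^{-u} du is strictly positive for all r > 0, equal to α e^{4π²r²}(2πr)^{-d} γ(d/2, 4π²r²) for r ≤ ε and αβ e^{4π²r²}(2πr)^{-d} Γ(d/2, 4π²r²) for r > ε, increasing on [0,ε], decreasing on [ε,∞), with k̂(0⁺) = 2α/d and k̂(r) → 0 as r → ∞. -/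

import Mathlib

/-! Substituting `z = x t` gives `x^{-s} e^x γ(s,x) = ∫₀¹ t^{s-1} e^{x(1-t)} dt` and
`x^{-s} e^x Γ(s,x) = ∫₁^∞ t^{s-1} e^{x(1-t)} dt`; as `1 - t` has a fixed sign on each range, the
first is increasing and the second decreasing in `x`. The choice of `β` makes the integral of
`q(√u/(2π)) u^{d/2-1} e^{-u}` over `(0, ∞)` vanish, so for `r ≥ ε` the integral over `(0, 4π²r²]`
equals minus the one over `(4π²r², ∞)`. Since `(2πr)^d = (4π²r²)^{d/2}`, this makes `k̂` the first
scaled function times `α` on `(0, ε]` and the second times `αβ` on `[ε, ∞)`. The limits come from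
`1/s ≤ ∫₀¹ t^{s-1} e^{x(1-t)} dt ≤ e^x/s` and `∫₁^∞ t^{s-1} e^{x(1-t)} dt ≤ 1/(x - |s-1|)`. -/

open MeasureTheory

/-- The lower incomplete gamma function `γ(s,x) = ∫₀^x z^{s-1} e^{-z} dz`. -/
noncomputable def lowerGamma (s x : ℝ) : ℝ :=
  ∫ z in Set.Ioc (0:ℝ) x, z ^ (s - 1) * Real.exp (-z)

/-- The upper incomplete gamma function `Γ(s,x) = ∫_x^∞ z^{s-1} e^{-z} dz`. -/
noncomputable def upperGamma (s x : ℝ) : ℝ :=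
  ∫ z in Set.Ioi x, z ^ (s - 1) * Real.exp (-z)

/-- The step weight: `q(r) = -α` for `r ≤ ε` and `q(r) = αβ` for `r > ε`, with
`β = γ(d/2, 4π²ε²)/Γ(d/2, 4π²ε²)`. -/
noncomputable def stepQ (α ε : ℝ) (d : ℕ) (r : ℝ) : ℝ :=
  if r ≤ ε then -α
  else α * (lowerGamma ((d : ℝ) / 2) (4 * Real.pi ^ 2 * ε ^ 2) /
    upperGamma ((d : ℝ) / 2) (4 * Real.pi ^ 2 * ε ^ 2))

/-- The associated kernel frequency
`k̂(r) = -(2πr)^{-d} e^{4π²r²} ∫₀^{4π²r²} q(√u/(2π)) u^{d/2-1} e^{-u} du`. -/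
noncomputable def stepKhat (α ε : ℝ) (d : ℕ) (r : ℝ) : ℝ :=
  -(1 / (2 * Real.pi * r) ^ d) * Real.exp (4 * Real.pi ^ 2 * r ^ 2) *
    ∫ u in Set.Ioc (0:ℝ) (4 * Real.pi ^ 2 * r ^ 2),
      stepQ α ε d (Real.sqrt u / (2 * Real.pi)) * u ^ ((d : ℝ) / 2 - 1) * Real.exp (-u)

open Set Real Filter Topology

lemma setIntegral_pos_of_forall_pos {X : Type*} [MeasurableSpace X] {μ : Measure X}
    {f : X → ℝ} {S : Set X} (hS : MeasurableSet S) (hμS : μ S ≠ 0)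
    (hf : IntegrableOn f S μ) (hpos : ∀ x ∈ S, 0 < f x) : 0 < ∫ x in S, f x ∂μ := by
  rwa [setIntegral_pos_iff_support_of_nonneg_ae
    (ae_restrict_of_forall_mem hS fun x hx => (hpos x hx).le) hf,
    inter_eq_right.2 fun x hx => Function.mem_support.2 (hpos x hx).ne', pos_iff_ne_zero]

lemma rpow_le_exp_abs_mul_sub_one (a : ℝ) {t : ℝ} (ht : 1 ≤ t) :
    t ^ a ≤ exp (|a| * (t - 1)) := by
  have ht0 : 0 < t := one_pos.trans_le ht
  rw [rpow_def_of_pos ht0, exp_le_exp, mul_comm]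
  calc a * log t ≤ |a| * log t := mul_le_mul_of_nonneg_right (le_abs_self a) (log_nonneg ht)
    _ ≤ |a| * (t - 1) := mul_le_mul_of_nonneg_left (log_le_sub_one_of_pos ht0) (abs_nonneg a)

section IncompleteGamma

variable {s : ℝ}

lemma integrableOn_rpow_mul_exp_neg_Ioi (hs : 0 < s) {a : ℝ} (ha : 0 ≤ a) :
    IntegrableOn (fun z : ℝ => z ^ (s - 1) * exp (-z)) (Ioi a) :=
  ((GammaIntegral_convergent hs).mono_set (Ioi_subset_Ioi ha)).congr_fun
    (fun _ _ => mul_comm _ _) measurableSet_Ioi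

lemma lowerGamma_pos (hs : 0 < s) {x : ℝ} (hx : 0 < x) : 0 < lowerGamma s x :=
  setIntegral_pos_of_forall_pos measurableSet_Ioc (by simp [hx])
    ((integrableOn_rpow_mul_exp_neg_Ioi hs le_rfl).mono_set Ioc_subset_Ioi_self)
    fun z hz => by have := hz.1; positivity

lemma upperGamma_pos (hs : 0 < s) {x : ℝ} (hx : 0 ≤ x) : 0 < upperGamma s x :=
  setIntegral_pos_of_forall_pos measurableSet_Ioi (by simp)
    (integrableOn_rpow_mul_exp_neg_Ioi hs hx)
    fun z hz => by have := hx.trans_lt hz; positivity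

noncomputable def scaledLowerGamma (s x : ℝ) : ℝ :=
  ∫ t in Ioc (0 : ℝ) 1, t ^ (s - 1) * exp (x * (1 - t))

noncomputable def scaledUpperGamma (s x : ℝ) : ℝ :=
  ∫ t in Ioi (1 : ℝ), t ^ (s - 1) * exp (x * (1 - t))

lemma integrableOn_rpow_Ioc_zero_one (hs : 0 < s) :
    IntegrableOn (fun t : ℝ => t ^ (s - 1)) (Ioc 0 1) :=
  (intervalIntegrable_iff_integrableOn_Ioc_of_le zero_le_one).mp
    (intervalIntegral.intervalIntegrable_rpow' (by linarith))

lemma integral_rpow_Ioc_zero_one (hs : 0 < s) : ∫ t in Ioc (0 : ℝ) 1, t ^ (s - 1) = 1 / s := by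
  rw [← intervalIntegral.integral_of_le zero_le_one, integral_rpow (Or.inl (by linarith)),
    sub_add_cancel, one_rpow, zero_rpow hs.ne', sub_zero]

lemma integrableOn_scaledLowerGamma_integrand (hs : 0 < s) (x : ℝ) :
    IntegrableOn (fun t : ℝ => t ^ (s - 1) * exp (x * (1 - t))) (Ioc 0 1) := by
  refine (integrableOn_rpow_Ioc_zero_one hs).mul_bdd (c := exp |x|) (by fun_prop) ?_
  filter_upwards [ae_restrict_mem measurableSet_Ioc] with t ht
  rw [norm_eq_abs, abs_exp, exp_le_exp]
  calc x * (1 - t) ≤ |x| * (1 - t) :=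
        mul_le_mul_of_nonneg_right (le_abs_self x) (by linarith [ht.2])
    _ ≤ |x| := by nlinarith [abs_nonneg x, ht.1]

lemma integrableOn_scaledUpperGamma_integrand (hs : 0 < s) {x : ℝ} (hx : 0 < x) :
    IntegrableOn (fun t : ℝ => t ^ (s - 1) * exp (x * (1 - t))) (Ioi 1) := by
  have h : IntegrableOn (fun t : ℝ => (x * t) ^ (s - 1) * exp (-(x * t))) (Ioi 1) :=
    (integrableOn_Ioi_comp_mul_left_iff _ 1 hx).2
      (integrableOn_rpow_mul_exp_neg_Ioi hs (by simpa using hx.le))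
  refine IntegrableOn.congr_fun (h.const_mul ((x ^ (s - 1))⁻¹ * exp x)) (fun t ht => ?_)
    measurableSet_Ioi
  have ht0 : (0 : ℝ) < t := one_pos.trans ht
  rw [mul_rpow hx.le ht0.le, show -(x * t) = -x + x * (1 - t) by ring, exp_add, exp_neg]
  field_simp

lemma lowerGamma_eq_mul_scaledLowerGamma {x : ℝ} (hx : 0 < x) :
    lowerGamma s x = x ^ s * exp (-x) * scaledLowerGamma s x := by
  have hsub := intervalIntegral.integral_comp_mul_left
    (fun z : ℝ => z ^ (s - 1) * exp (-z)) (a := 0) (b := 1) hx.ne'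
  rw [mul_zero, mul_one, intervalIntegral.integral_of_le hx.le, intervalIntegral.integral_of_le
    zero_le_one, setIntegral_congr_fun measurableSet_Ioc
      (g := fun t => x ^ (s - 1) * exp (-x) * (t ^ (s - 1) * exp (x * (1 - t)))) fun t ht => by
        rw [mul_rpow hx.le ht.1.le, show -(x * t) = -x + x * (1 - t) by ring, exp_add]; ring,
    integral_const_mul, smul_eq_mul] at hsub
  rw [lowerGamma, scaledLowerGamma, rpow_sub_one hx.ne'] at *
  field_simp at hsub ⊢
  linarith

lemma upperGamma_eq_mul_scaledUpperGamma {x : ℝ} (hx : 0 < x) :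
    upperGamma s x = x ^ s * exp (-x) * scaledUpperGamma s x := by
  have hsub := integral_comp_mul_left_Ioi (fun z : ℝ => z ^ (s - 1) * exp (-z)) 1 hx
  rw [mul_one, setIntegral_congr_fun measurableSet_Ioi
      (g := fun t => x ^ (s - 1) * exp (-x) * (t ^ (s - 1) * exp (x * (1 - t)))) fun t ht => by
        rw [mul_rpow hx.le (one_pos.trans ht).le, show -(x * t) = -x + x * (1 - t) by ring,
          exp_add]; ring,
    integral_const_mul, smul_eq_mul] at hsub
  rw [upperGamma, scaledUpperGamma, rpow_sub_one hx.ne'] at *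
  field_simp at hsub ⊢
  linarith

lemma scaledLowerGamma_mono (hs : 0 < s) : Monotone (scaledLowerGamma s) := fun x y hxy =>
  setIntegral_mono_on (integrableOn_scaledLowerGamma_integrand hs x)
    (integrableOn_scaledLowerGamma_integrand hs y) measurableSet_Ioc fun t ht => by
      have := ht.1
      gcongr
      linarith [ht.2]

lemma scaledUpperGamma_antitoneOn (hs : 0 < s) : AntitoneOn (scaledUpperGamma s) (Ioi 0) :=
  fun x hx y _ hxy =>
  setIntegral_mono_on (integrableOn_scaledUpperGamma_integrand hs (hx.out.trans_le hxy))
    (integrableOn_scaledUpperGamma_integrand hs hx) measurableSet_Ioi fun t ht => by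
      have := one_pos.trans ht.out
      gcongr ?_ * exp ?_
      exact mul_le_mul_of_nonpos_right hxy (by linarith [ht.out])

lemma one_div_le_scaledLowerGamma (hs : 0 < s) {x : ℝ} (hx : 0 ≤ x) :
    1 / s ≤ scaledLowerGamma s x := by
  rw [← integral_rpow_Ioc_zero_one hs]
  refine setIntegral_mono_on (integrableOn_rpow_Ioc_zero_one hs)
    (integrableOn_scaledLowerGamma_integrand hs x) measurableSet_Ioc fun t ht => ?_
  have := ht.1
  exact le_mul_of_one_le_right (by positivity)
    (one_le_exp (mul_nonneg hx (by linarith [ht.2])))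

lemma scaledLowerGamma_le_exp_mul_one_div (hs : 0 < s) {x : ℝ} (hx : 0 ≤ x) :
    scaledLowerGamma s x ≤ exp x * (1 / s) := by
  rw [← integral_rpow_Ioc_zero_one hs, ← integral_const_mul]
  refine setIntegral_mono_on (integrableOn_scaledLowerGamma_integrand hs x)
    ((integrableOn_rpow_Ioc_zero_one hs).const_mul _) measurableSet_Ioc fun t ht => ?_
  have := ht.1
  rw [mul_comm (exp x)]
  gcongr
  nlinarith [ht.2]

lemma tendsto_scaledLowerGamma_nhdsGT_zero (hs : 0 < s) :
    Tendsto (scaledLowerGamma s) (𝓝[>] 0) (𝓝 (1 / s)) := by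
  have hexp : Tendsto (fun x => exp x * (1 / s)) (𝓝[>] 0) (𝓝 (1 / s)) := by
    simpa using ((continuous_exp.tendsto 0).mono_left nhdsWithin_le_nhds).mul_const (1 / s)
  refine tendsto_of_tendsto_of_tendsto_of_le_of_le' tendsto_const_nhds hexp ?_ ?_ <;>
    filter_upwards [self_mem_nhdsWithin] with x hx
  exacts [one_div_le_scaledLowerGamma hs hx.out.le,
    scaledLowerGamma_le_exp_mul_one_div hs hx.out.le]

lemma scaledUpperGamma_nonneg (s x : ℝ) : 0 ≤ scaledUpperGamma s x :=
  setIntegral_nonneg measurableSet_Ioi fun t ht => by have := one_pos.trans ht.out; positivity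

lemma scaledUpperGamma_le_one_div_sub {x : ℝ} (hx : |s - 1| < x) :
    scaledUpperGamma s x ≤ (x - |s - 1|)⁻¹ := by
  set c := |s - 1|
  have hxc : c - x < 0 := by linarith
  have hdom : ∀ t, exp (c * (t - 1)) * exp (x * (1 - t)) = exp (x - c) * exp ((c - x) * t) :=
    fun t => by rw [← exp_add, ← exp_add]; ring_nf
  have hint : ∫ t in Ioi (1 : ℝ), exp (x - c) * exp ((c - x) * t) = (x - c)⁻¹ := by
    rw [integral_const_mul, integral_exp_mul_Ioi hxc, mul_one, mul_div_assoc', mul_neg,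
      ← exp_add, sub_add_sub_cancel', sub_self, exp_zero, neg_div, ← div_neg, neg_sub, one_div]
  rw [← hint]
  refine integral_mono_of_nonneg
    (ae_restrict_of_forall_mem measurableSet_Ioi fun t ht => ?_)
    ((integrableOn_exp_mul_Ioi hxc 1).const_mul _)
    (ae_restrict_of_forall_mem measurableSet_Ioi fun t ht => ?_)
  · have := one_pos.trans ht.out
    positivity
  · dsimp only
    rw [← hdom]
    gcongr
    exact rpow_le_exp_abs_mul_sub_one _ (le_of_lt ht)

lemma tendsto_scaledUpperGamma_atTop (s : ℝ) : Tendsto (scaledUpperGamma s) atTop (𝓝 0) := by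
  have hshift : Tendsto (fun x : ℝ => x - |s - 1|) atTop atTop :=
    tendsto_atTop_add_const_right _ _ tendsto_id
  refine tendsto_of_tendsto_of_tendsto_of_le_of_le' tendsto_const_nhds hshift.inv_tendsto_atTop
    (Eventually.of_forall (scaledUpperGamma_nonneg s)) ?_
  filter_upwards [eventually_gt_atTop |s - 1|] with x hx
  exact scaledUpperGamma_le_one_div_sub hx

end IncompleteGamma

noncomputable def stepBeta (d : ℕ) (ε : ℝ) : ℝ :=
  lowerGamma ((d : ℝ) / 2) (4 * π ^ 2 * ε ^ 2) / upperGamma ((d : ℝ) / 2) (4 * π ^ 2 * ε ^ 2)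

-- Reducible, so that the lemmas below rewrite inside the unfolded `stepKhat`.
noncomputable abbrev stepIntegrand (α ε : ℝ) (d : ℕ) (u : ℝ) : ℝ :=
  stepQ α ε d (√u / (2 * π)) * u ^ ((d : ℝ) / 2 - 1) * exp (-u)

section StepWeight

variable {α ε : ℝ} {d : ℕ}

lemma stepIntegrand_eq (hε : 0 ≤ ε) (u : ℝ) :
    stepIntegrand α ε d u = (if u ≤ 4 * π ^ 2 * ε ^ 2 then -α else α * stepBeta d ε) *
      (u ^ ((d : ℝ) / 2 - 1) * exp (-u)) := by
  have hiff : √u / (2 * π) ≤ ε ↔ u ≤ 4 * π ^ 2 * ε ^ 2 := by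
    rw [div_le_iff₀ (by positivity), sqrt_le_left (by positivity), mul_pow, mul_pow]
    ring_nf
  rw [stepIntegrand, stepQ, if_congr hiff rfl rfl, mul_assoc]
  rfl

lemma integral_Ioc_stepIntegrand_of_le (hε : 0 ≤ ε) {X : ℝ} (hX : X ≤ 4 * π ^ 2 * ε ^ 2) :
    ∫ u in Ioc 0 X, stepIntegrand α ε d u = -α * lowerGamma ((d : ℝ) / 2) X := by
  rw [lowerGamma, ← integral_const_mul]
  refine setIntegral_congr_fun measurableSet_Ioc fun u hu => ?_
  rw [stepIntegrand_eq hε, if_pos (hu.2.trans hX)]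

lemma integral_Ioi_stepIntegrand_of_ge (hε : 0 ≤ ε) {X : ℝ} (hX : 4 * π ^ 2 * ε ^ 2 ≤ X) :
    ∫ u in Ioi X, stepIntegrand α ε d u = α * stepBeta d ε * upperGamma ((d : ℝ) / 2) X := by
  rw [upperGamma, ← integral_const_mul]
  refine setIntegral_congr_fun measurableSet_Ioi fun u hu => ?_
  rw [stepIntegrand_eq hε, if_neg (hX.trans_lt hu).not_ge]

lemma integrableOn_stepIntegrand (hd : 0 < d) (hε : 0 ≤ ε) :
    IntegrableOn (stepIntegrand α ε d) (Ioi 0) := by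
  have hs : 0 < (d : ℝ) / 2 := by positivity
  have hE : 0 ≤ 4 * π ^ 2 * ε ^ 2 := by positivity
  have hg := integrableOn_rpow_mul_exp_neg_Ioi hs le_rfl
  rw [← Ioc_union_Ioi_eq_Ioi hE]
  refine IntegrableOn.union ?_ ?_
  · refine IntegrableOn.congr_fun ((hg.mono_set Ioc_subset_Ioi_self).const_mul (-α))
      (fun u hu => ?_) measurableSet_Ioc
    rw [stepIntegrand_eq hε, if_pos hu.2]
  · refine IntegrableOn.congr_fun
      ((hg.mono_set (Ioi_subset_Ioi hE)).const_mul (α * stepBeta d ε)) (fun u hu => ?_)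
      measurableSet_Ioi
    rw [stepIntegrand_eq hε, if_neg (not_le.2 hu)]

lemma integral_stepIntegrand (hd : 0 < d) (hε : 0 ≤ ε) :
    ∫ u in Ioi 0, stepIntegrand α ε d u = 0 := by
  have hE : 0 ≤ 4 * π ^ 2 * ε ^ 2 := by positivity
  have hΓ := upperGamma_pos (s := (d : ℝ) / 2) (by positivity) hE
  have h := integrableOn_stepIntegrand (α := α) hd hε
  rw [← Ioc_union_Ioi_eq_Ioi hE, setIntegral_union (Ioc_disjoint_Ioi le_rfl) measurableSet_Ioi
    (h.mono_set Ioc_subset_Ioi_self) (h.mono_set (Ioi_subset_Ioi hE)),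
    integral_Ioc_stepIntegrand_of_le hε le_rfl, integral_Ioi_stepIntegrand_of_ge hε le_rfl,
    stepBeta, mul_assoc α, div_mul_cancel₀ _ hΓ.ne', neg_mul, neg_add_cancel]

lemma integral_Ioc_stepIntegrand_of_ge (hd : 0 < d) (hε : 0 ≤ ε) {X : ℝ}
    (hX : 4 * π ^ 2 * ε ^ 2 ≤ X) :
    ∫ u in Ioc 0 X, stepIntegrand α ε d u = -(α * stepBeta d ε * upperGamma ((d : ℝ) / 2) X) := by
  have hX0 : 0 ≤ X := (by positivity : (0 : ℝ) ≤ 4 * π ^ 2 * ε ^ 2).trans hX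
  have h := integrableOn_stepIntegrand (α := α) hd hε
  have htotal := integral_stepIntegrand (α := α) hd hε
  rw [← Ioc_union_Ioi_eq_Ioi hX0, setIntegral_union (Ioc_disjoint_Ioi le_rfl) measurableSet_Ioi
    (h.mono_set Ioc_subset_Ioi_self) (h.mono_set (Ioi_subset_Ioi hX0)),
    integral_Ioi_stepIntegrand_of_ge hε hX] at htotal
  linarith

lemma two_pi_mul_pow_eq_rpow (d : ℕ) {r : ℝ} (hr : 0 ≤ r) :
    (2 * π * r) ^ d = (4 * π ^ 2 * r ^ 2) ^ ((d : ℝ) / 2) := by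
  rw [show 4 * π ^ 2 * r ^ 2 = (2 * π * r) ^ 2 by ring, ← rpow_natCast (2 * π * r) 2,
    ← rpow_mul (by positivity), ← rpow_natCast]
  congr 1
  push_cast
  ring

lemma stepKhat_of_le {r : ℝ} (hr : 0 ≤ r) (hrε : r ≤ ε) :
    stepKhat α ε d r = α * exp (4 * π ^ 2 * r ^ 2) / (2 * π * r) ^ d *
      lowerGamma ((d : ℝ) / 2) (4 * π ^ 2 * r ^ 2) := by
  rw [stepKhat, integral_Ioc_stepIntegrand_of_le (hr.trans hrε) (by gcongr)]
  ring

lemma stepKhat_of_ge (hd : 0 < d) (hε : 0 ≤ ε) {r : ℝ} (hrε : ε ≤ r) :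
    stepKhat α ε d r = α * stepBeta d ε * exp (4 * π ^ 2 * r ^ 2) / (2 * π * r) ^ d *
      upperGamma ((d : ℝ) / 2) (4 * π ^ 2 * r ^ 2) := by
  rw [stepKhat, integral_Ioc_stepIntegrand_of_ge hd hε (by gcongr)]
  ring

lemma stepKhat_eq_scaledLowerGamma {r : ℝ} (hr : 0 < r) (hrε : r ≤ ε) :
    stepKhat α ε d r = α * scaledLowerGamma ((d : ℝ) / 2) (4 * π ^ 2 * r ^ 2) := by
  rw [stepKhat_of_le hr.le hrε, lowerGamma_eq_mul_scaledLowerGamma (by positivity),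
    two_pi_mul_pow_eq_rpow d hr.le, exp_neg]
  field_simp

lemma stepKhat_eq_scaledUpperGamma (hd : 0 < d) (hε : 0 < ε) {r : ℝ} (hrε : ε ≤ r) :
    stepKhat α ε d r = α * stepBeta d ε * scaledUpperGamma ((d : ℝ) / 2) (4 * π ^ 2 * r ^ 2) := by
  have hr : 0 < r := hε.trans_le hrε
  rw [stepKhat_of_ge hd hε.le hrε, upperGamma_eq_mul_scaledUpperGamma (by positivity),
    two_pi_mul_pow_eq_rpow d hr.le, exp_neg]
  field_simp

lemma stepBeta_pos (hd : 0 < d) (hε : 0 < ε) : 0 < stepBeta d ε :=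
  div_pos (lowerGamma_pos (by positivity) (by positivity))
    (upperGamma_pos (by positivity) (by positivity))

lemma stepKhat_pos (hd : 0 < d) (hα : 0 < α) (hε : 0 < ε) {r : ℝ} (hr : 0 < r) :
    0 < stepKhat α ε d r := by
  have hs : 0 < (d : ℝ) / 2 := by positivity
  rcases le_or_gt r ε with hrε | hrε
  · rw [stepKhat_of_le hr.le hrε]
    exact mul_pos (by positivity) (lowerGamma_pos hs (by positivity))
  · have := stepBeta_pos hd hε
    rw [stepKhat_of_ge hd hε.le hrε.le]
    exact mul_pos (by positivity) (upperGamma_pos hs (by positivity))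

lemma monotoneOn_stepKhat (hd : 0 < d) (hα : 0 ≤ α) : MonotoneOn (stepKhat α ε d) (Ioc 0 ε) := by
  intro a ha b hb hab
  rw [stepKhat_eq_scaledLowerGamma ha.1 ha.2, stepKhat_eq_scaledLowerGamma hb.1 hb.2]
  have := ha.1
  exact mul_le_mul_of_nonneg_left (scaledLowerGamma_mono (by positivity) (by gcongr)) hα

lemma antitoneOn_stepKhat (hd : 0 < d) (hα : 0 ≤ α) (hε : 0 < ε) :
    AntitoneOn (stepKhat α ε d) (Ici ε) := by
  intro a ha b hb hab
  rw [stepKhat_eq_scaledUpperGamma hd hε ha, stepKhat_eq_scaledUpperGamma hd hε hb]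
  have := hε.trans_le ha
  have := hε.trans_le hb
  exact mul_le_mul_of_nonneg_left (scaledUpperGamma_antitoneOn (by positivity)
    (show 0 < 4 * π ^ 2 * a ^ 2 by positivity) (show 0 < 4 * π ^ 2 * b ^ 2 by positivity)
    (by gcongr)) (mul_nonneg hα (stepBeta_pos hd hε).le)

lemma tendsto_stepKhat_nhdsGT_zero (hd : 0 < d) (hε : 0 < ε) :
    Tendsto (stepKhat α ε d) (𝓝[>] 0) (𝓝 (2 * α / d)) := by
  have hX : Tendsto (fun r : ℝ => 4 * π ^ 2 * r ^ 2) (𝓝[>] 0) (𝓝[>] 0) :=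
    tendsto_nhdsWithin_iff.2 ⟨((by fun_prop : Continuous fun r : ℝ => 4 * π ^ 2 * r ^ 2).tendsto'
      0 0 (by simp)).mono_left nhdsWithin_le_nhds,
      eventually_mem_nhdsWithin.mono fun r hr => mem_Ioi.2 (by have := hr.out; positivity)⟩
  have hs : 0 < (d : ℝ) / 2 := by positivity
  have hlim := ((tendsto_scaledLowerGamma_nhdsGT_zero hs).comp hX).const_mul α
  rw [show α * (1 / ((d : ℝ) / 2)) = 2 * α / d by field_simp] at hlim
  refine hlim.congr' ?_
  filter_upwards [Ioc_mem_nhdsGT hε] with r hr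
  exact (stepKhat_eq_scaledLowerGamma hr.1 hr.2).symm

lemma tendsto_stepKhat_atTop (hd : 0 < d) (hε : 0 < ε) :
    Tendsto (stepKhat α ε d) atTop (𝓝 0) := by
  have hX : Tendsto (fun r : ℝ => 4 * π ^ 2 * r ^ 2) atTop atTop :=
    (tendsto_pow_atTop two_ne_zero).const_mul_atTop (by positivity)
  have hlim := ((tendsto_scaledUpperGamma_atTop ((d : ℝ) / 2)).comp hX).const_mul (α * stepBeta d ε)
  rw [mul_zero] at hlim
  refine hlim.congr' ?_
  filter_upwards [eventually_ge_atTop ε] with r hr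
  exact (stepKhat_eq_scaledUpperGamma hd hε hr).symm

end StepWeight

/-- For the step weight `q`, the full integral `∫₀^∞ q(√u/(2π)) u^{d/2-1} e^{-u} du`
vanishes; the kernel frequency `k̂` is strictly positive, given piecewise by
`α e^{4π²r²}(2πr)^{-d} γ(d/2,4π²r²)` for `r ≤ ε` and
`αβ e^{4π²r²}(2πr)^{-d} Γ(d/2,4π²r²)` for `r > ε`, increasing on `(0,ε]`, decreasing
on `[ε,∞)`, with `k̂(0⁺) = 2α/d` and `k̂(r) → 0` as `r → ∞`. -/
theorem stmt18 (d : ℕ) (hd : 1 ≤ d) (α ε : ℝ) (hα : 0 < α) (hε : 0 < ε) :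
    (∫ u in Set.Ioi (0:ℝ),
        stepQ α ε d (Real.sqrt u / (2 * Real.pi)) * u ^ ((d : ℝ) / 2 - 1) * Real.exp (-u)) = 0 ∧
    (∀ r > (0:ℝ), 0 < stepKhat α ε d r) ∧
    (∀ r > (0:ℝ), r ≤ ε → stepKhat α ε d r =
      α * Real.exp (4 * Real.pi ^ 2 * r ^ 2) / (2 * Real.pi * r) ^ d *
        lowerGamma ((d : ℝ) / 2) (4 * Real.pi ^ 2 * r ^ 2)) ∧
    (∀ r > ε, stepKhat α ε d r =
      α * (lowerGamma ((d : ℝ) / 2) (4 * Real.pi ^ 2 * ε ^ 2) /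
          upperGamma ((d : ℝ) / 2) (4 * Real.pi ^ 2 * ε ^ 2)) *
        Real.exp (4 * Real.pi ^ 2 * r ^ 2) / (2 * Real.pi * r) ^ d *
        upperGamma ((d : ℝ) / 2) (4 * Real.pi ^ 2 * r ^ 2)) ∧
    MonotoneOn (stepKhat α ε d) (Set.Ioc 0 ε) ∧
    AntitoneOn (stepKhat α ε d) (Set.Ici ε) ∧
    Filter.Tendsto (stepKhat α ε d) (nhdsWithin 0 (Set.Ioi 0)) (nhds (2 * α / d)) ∧
    Filter.Tendsto (stepKhat α ε d) Filter.atTop (nhds 0) := by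
  exact ⟨integral_stepIntegrand hd hε.le, fun r hr => stepKhat_pos hd hα hε hr,
    fun r hr hrε => stepKhat_of_le hr.le hrε, fun r hrε => stepKhat_of_ge hd hε.le hrε.le,
    monotoneOn_stepKhat hd hα.le, antitoneOn_stepKhat hd hα.le hε,
    tendsto_stepKhat_nhdsGT_zero hd hε, tendsto_stepKhat_atTop hd hε⟩
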